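/- For α, β real with α not a nonpositive integer and λ ∈ ℂ, the Jacobi function φ^{(α,β)}_{iλ}(t) = ₂F₁((ρ-λ)/2, (ρ+λ)/2; α+1; -sinh²t) with ρ = α+β+1 satisfies the Jacobi differential equation u'' + ((2α+1) coth t + (2β+1) tanh t) u' = (λ² - ρ²) u on (0,∞). -/

import Mathlib

/-!
With `z(t) = -sinh² t` and `F = ₂F₁(a, b; c; ·)`, where `a, b = (ρ ∓ λ)/2` and `c = α + 1`, we have
`φ = F ∘ z`. Since `z'² = -4z(1 - z)` and `z'' + K z' = -4(c - (a + b + 1) z)` for the Jacobi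
coefficient `K = (2α+1) coth t + (2β+1) tanh t`, the Jacobi operator applied to `φ` is `-4` times
`z(1 - z) F'' + (c - (a + b + 1) z) F'`, i.e. `-4ab F = (λ² - ρ²) F` by the hypergeometric equation.
That equation is checked coefficientwise from the recurrence
`(n + 1)(c + n) F_{n+1} = (a + n)(b + n) F_n`, after differentiating the series termwise, which is
legitimate on the unit disc because the ratio of consecutive coefficients tends to `1`.
-/

open Real Complex

/-- The Gauss hypergeometric series `₂F₁(a,b;c;z)`. -/
noncomputable def hyp2F1 (a b c z : ℂ) : ℂ :=
  ∑' k : ℕ, ((ascPochhammer ℂ k).eval a * (ascPochhammer ℂ k).eval b /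
    ((ascPochhammer ℂ k).eval c * (Nat.factorial k : ℂ))) * z ^ k

/-- The Jacobi function `φ^{(α,β)}_{iλ}(t)`. -/
noncomputable def jacobiPhi (α β : ℝ) (lam : ℂ) (t : ℝ) : ℂ :=
  hyp2F1 ((((α : ℂ) + β + 1) - lam) / 2) ((((α : ℂ) + β + 1) + lam) / 2)
    ((α : ℂ) + 1) (-(Real.sinh t ^ 2 : ℝ))

open Filter Topology Asymptotics

-- Equivalently, the power series `∑ f n * z ^ n` has radius of convergence at least `1`.
def IsSubexponential (f : ℕ → ℂ) : Prop :=
  ∀ r : ℝ, 1 < r → f =O[atTop] fun n => r ^ n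

def derivCoeff (f : ℕ → ℂ) (n : ℕ) : ℂ := (n + 1) * f (n + 1)

theorem isSubexponential_natCast : IsSubexponential fun n => (n : ℂ) :=
  fun _ hr => (isLittleO_coe_const_pow_of_one_lt hr).isBigO

namespace IsSubexponential

variable {f g : ℕ → ℂ}

theorem sub (hf : IsSubexponential f) (hg : IsSubexponential g) :
    IsSubexponential (f - g) := fun r hr => (hf r hr).sub (hg r hr)

theorem mul (hf : IsSubexponential f) (hg : IsSubexponential g) :
    IsSubexponential (f * g) := by
  intro r hr
  have hs : 1 < √r := by rwa [Real.lt_sqrt zero_le_one, one_pow]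
  refine ((hf _ hs).mul (hg _ hs)).congr_right fun n => ?_
  rw [← mul_pow, Real.mul_self_sqrt (zero_le_one.trans hr.le)]

theorem natCast_mul (hf : IsSubexponential f) : IsSubexponential fun n => n * f n :=
  isSubexponential_natCast.mul hf

theorem comp_succ (hf : IsSubexponential f) : IsSubexponential fun n => f (n + 1) :=
  fun r hr => ((hf r hr).comp_tendsto (tendsto_add_atTop_nat 1)).trans <|
    ((isBigO_refl (fun n => r ^ n) atTop).const_mul_left r).congr_left fun n =>
      (pow_succ' r n).symm

theorem derivCoeff (hf : IsSubexponential f) : IsSubexponential (derivCoeff f) :=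
  fun r hr => (hf.natCast_mul.comp_succ r hr).congr_left fun n => by
    simp [_root_.derivCoeff]

theorem summable_norm_mul_pow (hf : IsSubexponential f) {ρ : ℝ} (hρ₀ : 0 ≤ ρ) (hρ₁ : ρ < 1) :
    Summable fun n => ‖f n‖ * ρ ^ n := by
  set r := 2 / (1 + ρ)
  have hr : 1 < r := by rw [one_lt_div (by linarith)]; linarith
  have hrρ : r * ρ < 1 := by rw [div_mul_eq_mul_div, div_lt_one (by linarith)]; linarith
  refine summable_of_isBigO_nat (summable_geometric_of_lt_one (by positivity) hrρ) ?_
  exact ((hf r hr).norm_left.mul (isBigO_refl (fun n => ρ ^ n) atTop)).congr_right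
    fun n => (mul_pow r ρ n).symm

theorem summable_mul_pow (hf : IsSubexponential f) {z : ℂ} (hz : ‖z‖ < 1) :
    Summable fun n => f n * z ^ n :=
  .of_norm <| by simpa [norm_mul, norm_pow] using hf.summable_norm_mul_pow (norm_nonneg z) hz

theorem of_succ_eq_mul {q : ℕ → ℂ} (hq : Tendsto q atTop (𝓝 1))
    (hf : ∀ n, f (n + 1) = q n * f n) : IsSubexponential f := by
  intro r hr
  have hr₀ : 0 < r := one_pos.trans hr
  have hq' : ∀ᶠ n in atTop, ‖q n‖ ≤ (1 + r) / 2 :=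
    hq.norm.eventually_le_const (by rw [norm_one]; linarith)
  have hsum : Summable fun n => ‖f n‖ / r ^ n := by
    refine summable_of_ratio_norm_eventually_le (r := (1 + r) / 2 / r)
      (by rw [div_lt_one hr₀]; linarith) ?_
    filter_upwards [hq'] with n hn
    rw [Real.norm_of_nonneg (by positivity), Real.norm_of_nonneg (by positivity), hf, norm_mul,
      pow_succ, div_mul_div_comm, mul_comm r]
    gcongr
  refine IsBigO.of_bound 1 ?_
  filter_upwards [hsum.tendsto_atTop_zero.eventually_le_const one_pos] with n hn
  rw [div_le_one (by positivity)] at hn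
  simpa [abs_of_pos hr₀] using hn

theorem hasDerivAt_tsum (hf : IsSubexponential f) {z : ℂ} (hz : ‖z‖ < 1) :
    HasDerivAt (fun w => ∑' n, f n * w ^ n) (∑' n, _root_.derivCoeff f n * z ^ n) z := by
  obtain ⟨ρ, hzρ, hρ₁⟩ := exists_between hz
  have hρ₀ : 0 < ρ := (norm_nonneg z).trans_lt hzρ
  have hu : Summable fun n => ‖f n‖ * n * ρ ^ (n - 1) := by
    refine (summable_nat_add_iff 1).1 <|
      (hf.derivCoeff.summable_norm_mul_pow hρ₀.le hρ₁).congr fun n => ?_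
    rw [_root_.derivCoeff, norm_mul, ← Nat.cast_add_one, Complex.norm_natCast, Nat.add_sub_cancel]
    ring
  have hbound : ∀ n, ∀ w ∈ Metric.ball (0 : ℂ) ρ,
      ‖f n * (n * w ^ (n - 1))‖ ≤ ‖f n‖ * n * ρ ^ (n - 1) := by
    intro n w hw
    rw [mem_ball_zero_iff] at hw
    rw [norm_mul, norm_mul, norm_pow, Complex.norm_natCast, ← mul_assoc]
    gcongr
  have h := hasDerivAt_tsum_of_isPreconnected hu Metric.isOpen_ball
    (convex_ball 0 ρ).isPreconnected (fun n w _ => (hasDerivAt_pow n w).const_mul (f n)) hbound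
    (Metric.mem_ball_self hρ₀) (hf.summable_mul_pow (by simp)) (mem_ball_zero_iff.2 hzρ)
  have hshift : ∀ n : ℕ, f (n + 1) * (((n + 1 : ℕ) : ℂ) * z ^ (n + 1 - 1)) =
      _root_.derivCoeff f n * z ^ n := fun n => by
    rw [_root_.derivCoeff, Nat.add_sub_cancel, Nat.cast_add_one]
    ring
  refine h.congr_deriv ?_
  rw [tsum_eq_zero_add' (by simpa only [hshift] using hf.derivCoeff.summable_mul_pow hz)]
  simp only [hshift, CharP.cast_eq_zero, zero_mul, mul_zero, zero_add]

theorem hasSum_natCast_mul (hf : IsSubexponential f) {z : ℂ} (hz : ‖z‖ < 1) :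
    HasSum (fun n => n * f n * z ^ n) (z * ∑' n, _root_.derivCoeff f n * z ^ n) := by
  rw [← hasSum_nat_add_iff' 1]
  simpa [_root_.derivCoeff, pow_succ, mul_comm, mul_left_comm, mul_assoc] using
    (hf.derivCoeff.summable_mul_pow hz).hasSum.mul_left z

theorem deriv_tsum (hf : IsSubexponential f) {z : ℂ} (hz : ‖z‖ < 1) :
    deriv (fun w => ∑' n, f n * w ^ n) z = ∑' n, _root_.derivCoeff f n * z ^ n :=
  (hf.hasDerivAt_tsum hz).deriv

theorem deriv_deriv_tsum (hf : IsSubexponential f) {z : ℂ} (hz : ‖z‖ < 1) :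
    deriv (deriv fun w => ∑' n, f n * w ^ n) z =
      ∑' n, _root_.derivCoeff (_root_.derivCoeff f) n * z ^ n := by
  have hderiv : deriv (fun w => ∑' n, f n * w ^ n) =ᶠ[𝓝 z]
      fun w => ∑' n, _root_.derivCoeff f n * w ^ n :=
    eventually_of_mem (Metric.isOpen_ball.mem_nhds (mem_ball_zero_iff.2 hz)) fun w hw =>
      hf.deriv_tsum (mem_ball_zero_iff.1 hw)
  rw [hderiv.deriv_eq, hf.derivCoeff.deriv_tsum hz]

theorem hypergeometric_ode {a b c z : ℂ} (hf : IsSubexponential f)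
    (hrec : ∀ n : ℕ, (n + 1) * (c + n) * f (n + 1) = (a + n) * (b + n) * f n) (hz : ‖z‖ < 1) :
    z * (1 - z) * ∑' n, _root_.derivCoeff (_root_.derivCoeff f) n * z ^ n +
      (c - (a + b + 1) * z) * ∑' n, _root_.derivCoeff f n * z ^ n = a * b * ∑' n, f n * z ^ n := by
  have hzF' := hf.hasSum_natCast_mul hz
  have hzF'' := hf.derivCoeff.hasSum_natCast_mul hz
  have hzzF'' := (hf.natCast_mul.sub hf).hasSum_natCast_mul hz
  have hshift : ∀ n : ℕ, _root_.derivCoeff ((fun n => n * f n) - f) n * z ^ n =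
      n * _root_.derivCoeff f n * z ^ n := fun n => by
    simp only [_root_.derivCoeff, Pi.sub_apply, Nat.cast_add_one]
    ring
  -- `z · ∑ n F'ₙ zⁿ = ∑ n (n - 1) fₙ zⁿ` is the series of `z² F''`
  simp only [hshift, hzF''.tsum_eq] at hzzF''
  have hcomb := (hzF''.sub hzzF'').add
    (((hf.derivCoeff.summable_mul_pow hz).hasSum.mul_left c).sub (hzF'.mul_left (a + b + 1)))
  have hterm : ∀ n : ℕ, n * _root_.derivCoeff f n * z ^ n - n * ((fun n => n * f n) - f) n * z ^ n
      + (c * (_root_.derivCoeff f n * z ^ n) - (a + b + 1) * (n * f n * z ^ n)) =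
      a * b * (f n * z ^ n) := fun n => by
    simp only [_root_.derivCoeff, Pi.sub_apply]
    linear_combination z ^ n * hrec n
  simp only [hterm] at hcomb
  rw [((hf.summable_mul_pow hz).hasSum.mul_left (a * b)).unique hcomb]
  ring

end IsSubexponential

theorem deriv_deriv_comp_of_differentiableOn {G : ℂ → ℂ} {U : Set ℂ} (hU : IsOpen U)
    (hG : DifferentiableOn ℂ G U) {h h' : ℝ → ℂ} {h'' : ℂ} {t : ℝ}
    (hh : ∀ s, HasDerivAt h (h' s) s) (hh' : HasDerivAt h' h'' t) (ht : h t ∈ U) :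
    deriv (deriv (G ∘ h)) t = deriv (deriv G) (h t) * h' t ^ 2 + deriv G (h t) * h'' := by
  have hderiv : deriv (G ∘ h) =ᶠ[𝓝 t] fun s => deriv G (h s) * h' s :=
    eventually_of_mem ((hh t).continuousAt.preimage_mem_nhds (hU.mem_nhds ht)) fun s hs => by
      rw [deriv_comp s (hG.differentiableAt (hU.mem_nhds hs)) (hh s).differentiableAt,
        (hh s).deriv]
  rw [hderiv.deriv_eq]
  exact ((((hG.deriv hU).differentiableAt (hU.mem_nhds ht)).hasDerivAt.comp t (hh t)).mul
    hh').deriv.trans (by rw [Function.comp_apply]; ring)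

theorem hyp2F1_eq_tsum (a b c : ℂ) :
    hyp2F1 a b c = fun z => ∑' n, ordinaryHypergeometricCoefficient a b c n * z ^ n := by
  ext z
  refine tsum_congr fun n => ?_
  rw [div_eq_mul_inv, mul_inv]
  ring

theorem ordinaryHypergeometricCoefficient_succ (a b c : ℂ) (n : ℕ) :
    ordinaryHypergeometricCoefficient a b c (n + 1) =
      (a + n) * (b + n) / ((n + 1) * (c + n)) * ordinaryHypergeometricCoefficient a b c n := by
  simp only [ordinaryHypergeometricCoefficient, ascPochhammer_succ_eval, Nat.factorial_succ,
    Nat.cast_mul, Nat.cast_add_one, mul_inv, div_eq_mul_inv]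
  ring

theorem isSubexponential_ordinaryHypergeometricCoefficient (a b c : ℂ) :
    IsSubexponential (ordinaryHypergeometricCoefficient a b c) := by
  refine .of_succ_eq_mul ?_ (ordinaryHypergeometricCoefficient_succ a b c)
  have ha : Tendsto (fun n : ℕ => (a + n) / (1 + n)) atTop (𝓝 1) := by
    simpa using tendsto_add_mul_div_add_mul_atTop_nhds a 1 1 one_ne_zero
  have hb : Tendsto (fun n : ℕ => (b + n) / (c + n)) atTop (𝓝 1) := by
    simpa using tendsto_add_mul_div_add_mul_atTop_nhds b c 1 one_ne_zero
  simpa only [div_mul_div_comm, add_comm (1 : ℂ), mul_one] using ha.mul hb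

theorem differentiableOn_hyp2F1 (a b c : ℂ) :
    DifferentiableOn ℂ (hyp2F1 a b c) (Metric.ball 0 1) := fun _ hz =>
  (hyp2F1_eq_tsum a b c ▸ (isSubexponential_ordinaryHypergeometricCoefficient a b c).hasDerivAt_tsum
    (mem_ball_zero_iff.1 hz)).differentiableAt.differentiableWithinAt

theorem hyp2F1_ode (a b : ℂ) {c : ℂ} (hc : ∀ n : ℕ, c + n ≠ 0) {z : ℂ} (hz : ‖z‖ < 1) :
    z * (1 - z) * deriv (deriv (hyp2F1 a b c)) z + (c - (a + b + 1) * z) * deriv (hyp2F1 a b c) z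
      = a * b * hyp2F1 a b c z := by
  have hF := isSubexponential_ordinaryHypergeometricCoefficient a b c
  rw [hyp2F1_eq_tsum, hF.deriv_deriv_tsum hz, hF.deriv_tsum hz]
  refine hF.hypergeometric_ode (fun n => ?_) hz
  rw [ordinaryHypergeometricCoefficient_succ]
  field_simp [Nat.cast_add_one_ne_zero n, hc n]

theorem ofReal_add_one_add_natCast_ne_zero {α : ℝ} (hα : ∀ m : ℕ, α ≠ -(m : ℝ)) (n : ℕ) :
    (α : ℂ) + 1 + n ≠ 0 := fun h => hα (n + 1) <| by
  push_cast
  exact_mod_cast (by linear_combination h : (α : ℂ) = -(n + 1))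

theorem hasDerivAt_neg_sinh_sq (s : ℝ) :
    HasDerivAt (fun s : ℝ => -((Real.sinh s ^ 2 : ℝ) : ℂ))
      (-(2 * Real.sinh s * Real.cosh s : ℝ)) s :=
  (((Real.hasDerivAt_sinh s).fun_pow 2).ofReal_comp.fun_neg).congr_deriv (by push_cast; ring)

theorem hasDerivAt_neg_two_sinh_mul_cosh (s : ℝ) :
    HasDerivAt (fun s : ℝ => -((2 * Real.sinh s * Real.cosh s : ℝ) : ℂ))
      (-(2 * (Real.cosh s ^ 2 + Real.sinh s ^ 2) : ℝ)) s :=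
  ((((Real.hasDerivAt_sinh s).const_mul 2).fun_mul (Real.hasDerivAt_cosh s)).ofReal_comp.fun_neg
    ).congr_deriv (by push_cast; ring)

theorem jacobi_drift_mul_two_sinh_mul_cosh (α β : ℝ) {t : ℝ} (ht : 0 < t) :
    ((2 * α + 1) * (Real.cosh t / Real.sinh t) + (2 * β + 1) * Real.tanh t) *
      (2 * Real.sinh t * Real.cosh t) =
      2 * (2 * α + 1) * Real.cosh t ^ 2 + 2 * (2 * β + 1) * Real.sinh t ^ 2 := by
  rw [Real.tanh_eq_sinh_div_cosh]
  field_simp [(Real.sinh_pos_iff.2 ht).ne', (Real.cosh_pos t).ne']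

theorem jacobiPhi_ode (α β : ℝ) (hα : ∀ m : ℕ, α ≠ -(m : ℝ)) (lam : ℂ)
    (t : ℝ) (ht : 0 < t) (ht1 : Real.sinh t ^ 2 < 1) :
    deriv (deriv (jacobiPhi α β lam)) t +
      (((2*α+1) * (Real.cosh t / Real.sinh t) + (2*β+1) * Real.tanh t : ℝ) : ℂ) *
        deriv (jacobiPhi α β lam) t
    = (lam ^ 2 - ((α : ℂ) + β + 1) ^ 2) * jacobiPhi α β lam t := by
  have hz : -((Real.sinh t ^ 2 : ℝ) : ℂ) ∈ Metric.ball 0 1 := by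
    rwa [mem_ball_zero_iff, norm_neg, Complex.norm_real, Real.norm_of_nonneg (sq_nonneg _)]
  have hφ : jacobiPhi α β lam = hyp2F1 _ _ _ ∘ fun s : ℝ => -((Real.sinh s ^ 2 : ℝ) : ℂ) := rfl
  have hG := differentiableOn_hyp2F1 ((((α : ℂ) + β + 1) - lam) / 2)
    ((((α : ℂ) + β + 1) + lam) / 2) ((α : ℂ) + 1)
  have hode := hyp2F1_ode ((((α : ℂ) + β + 1) - lam) / 2) ((((α : ℂ) + β + 1) + lam) / 2)
    (ofReal_add_one_add_natCast_ne_zero hα) (mem_ball_zero_iff.1 hz)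
  rw [hφ, deriv_deriv_comp_of_differentiableOn Metric.isOpen_ball hG hasDerivAt_neg_sinh_sq
      (hasDerivAt_neg_two_sinh_mul_cosh t) hz,
    deriv_comp t (hG.differentiableAt (Metric.isOpen_ball.mem_nhds hz))
      (hasDerivAt_neg_sinh_sq t).differentiableAt,
    (hasDerivAt_neg_sinh_sq t).deriv, Function.comp_apply]
  generalize deriv (deriv (hyp2F1 _ _ _)) _ = G₂ at hode ⊢
  generalize deriv (hyp2F1 _ _ _) _ = G₁ at hode ⊢
  generalize hyp2F1 _ _ _ _ = G₀ at hode ⊢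
  have hK := congrArg (fun x : ℝ => (x : ℂ)) (jacobi_drift_mul_two_sinh_mul_cosh α β ht)
  have hcosh := congrArg (fun x : ℝ => (x : ℂ)) (Real.cosh_sq t)
  push_cast at hode hK hcosh ⊢
  linear_combination
    (-4) * hode - G₁ * hK + (4 * Complex.sinh t ^ 2 * G₂ - (4 * α + 4) * G₁) * hcosh
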